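/- Let D be a function on pairs of density operators satisfying the data processing inequality D(Γ(ρ),Γ(σ)) ≤ D(ρ,σ) for every quantum channel Γ. If Γ is a channel commuting with a resource destroying map λ (Γ∘λ = λ∘Γ), then the function D̃(ρ) := D(ρ, λ(ρ)) satisfies D̃(Γ(ρ)) ≤ D̃(ρ) for every state ρ. -/
import Mathlib
open Matrix
open scoped ComplexOrder

/-- A density operator on a finite-dimensional Hilbert space. -/
def IsDensity {n : ℕ} (ρ : Matrix (Fin n) (Fin n) ℂ) : Prop :=
  ρ.PosSemidef ∧ ρ.trace = 1

/-- A completely positive trace-preserving map (quantum channel), defined via the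
existence of a Kraus representation. -/
def IsCPTP {n : ℕ} (Φ : Matrix (Fin n) (Fin n) ℂ → Matrix (Fin n) (Fin n) ℂ) : Prop :=
  ∃ (κ : ℕ) (K : Fin κ → Matrix (Fin n) (Fin n) ℂ),
    (∀ ρ, Φ ρ = ∑ μ, K μ * ρ * (K μ)ᴴ) ∧ (∑ μ, (K μ)ᴴ * K μ) = 1

/-- If D is contractive under quantum channels and the channel Γ commutes with the
resource destroying map λ, then D̃(ρ) := D(ρ, λ(ρ)) is monotone nonincreasing under Γ. -/
theorem simple_measure_monotone {n : ℕ}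
    (D : Matrix (Fin n) (Fin n) ℂ → Matrix (Fin n) (Fin n) ℂ → ℝ)
    (l Γ : Matrix (Fin n) (Fin n) ℂ → Matrix (Fin n) (Fin n) ℂ)
    (hΓ : IsCPTP Γ)
    (hl : ∀ ρ, IsDensity ρ → IsDensity (l ρ))
    (hD : ∀ Γ' : Matrix (Fin n) (Fin n) ℂ → Matrix (Fin n) (Fin n) ℂ, IsCPTP Γ' →
      ∀ ρ σ, IsDensity ρ → IsDensity σ → D (Γ' ρ) (Γ' σ) ≤ D ρ σ)
    (hcomm : ∀ ρ, Γ (l ρ) = l (Γ ρ)) :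
    ∀ ρ, IsDensity ρ → D (Γ ρ) (l (Γ ρ)) ≤ D ρ (l ρ) := by
  intro ρ hρ
  have := hD Γ hΓ ρ (l ρ) hρ (hl ρ hρ)
  rwa [hcomm ρ] at this
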